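/- Let M be a family of Meshalkin sequences of length p ≥ 2 in PG(n-1,q) such that each M_k for k < p is an antichain of subspaces. Then Σ_{a ∈ M} 1/([n; r(a)]_q · q^{s_2(r(a))}) ≤ 1. -/

import Mathlib

open Finset

/-- The `q`-factorial `n!_q = (q^n - 1)(q^(n-1) - 1) ⋯ (q - 1)`. -/
def qFact (q n : ℕ) : ℕ := ∏ i ∈ Finset.range n, (q ^ (i + 1) - 1)

/-- The Gaussian multinomial coefficient `[n; α_1, …, α_p]_q = n!_q / (α_1!_q ⋯ α_p!_q)`. -/
noncomputable def gaussMultinomial (q n : ℕ) {p : ℕ} (α : Fin p → ℕ) : ℚ :=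
  (qFact q n : ℚ) / ∏ i, (qFact q (α i) : ℚ)

/-- The second elementary symmetric function `s_2(α) = ∑_{i<j} α_i α_j`. -/
def s2 {p : ℕ} (α : Fin p → ℕ) : ℕ :=
  ∑ i, ∑ j ∈ Finset.univ.filter (fun j : Fin p => i < j), α i * α j

namespace MeshalkinAux

variable {p : ℕ}

/-- extension of `α` to `ℕ` by zero. -/
def ext' (α : Fin p → ℕ) (j : ℕ) : ℕ := if h : j < p then α ⟨j, h⟩ else 0

/-- partial sums -/
def beta (α : Fin p → ℕ) (k : ℕ) : ℕ := ∑ j ∈ Finset.range k, ext' α j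

lemma ext'_coe (α : Fin p → ℕ) (k : Fin p) : ext' α k.1 = α k := by
  simp [ext', k.isLt]

lemma beta_succ (α : Fin p → ℕ) (k : ℕ) : beta α (k + 1) = beta α k + ext' α k :=
  Finset.sum_range_succ _ _

lemma beta_succ' (α : Fin p → ℕ) (k : Fin p) : beta α (k.1 + 1) = beta α k.1 + α k := by
  rw [beta_succ, ext'_coe]

lemma beta_mono (α : Fin p → ℕ) : Monotone (beta α) := fun _ _ h =>
  Finset.sum_le_sum_of_subset (Finset.range_subset_range.2 h)

lemma beta_top (α : Fin p → ℕ) : beta α p = ∑ k, α k := by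
  rw [beta, ← Fin.sum_univ_eq_sum_range (fun j => ext' α j) p]
  exact Finset.sum_congr rfl fun k _ => ext'_coe α k

/-- the `k`-th block of indices -/
def blk (n : ℕ) (α : Fin p → ℕ) (k : Fin p) : Set (Fin n) :=
  {i | beta α k.1 ≤ i.1 ∧ i.1 < beta α (k.1 + 1)}

lemma exists_blk {n : ℕ} {α : Fin p → ℕ} (hs : beta α p = n) (i : Fin n) :
    ∃ k : Fin p, i ∈ blk n α k := by
  have h0 : beta α 0 ≤ i.1 := by simp [beta]
  set k := Nat.findGreatest (fun m => beta α m ≤ i.1) p with hk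
  have hP : beta α k ≤ i.1 := Nat.findGreatest_spec (P := fun m => beta α m ≤ i.1) (Nat.zero_le p) h0
  have hkle : k ≤ p := Nat.findGreatest_le p
  have hkp : k < p := by
    rcases lt_or_eq_of_le hkle with h | h
    · exact h
    · exfalso; rw [h, hs] at hP; exact absurd i.isLt (not_lt.2 hP)
  have hgt : ¬ beta α (k + 1) ≤ i.1 :=
    Nat.findGreatest_is_greatest (P := fun m => beta α m ≤ i.1)
      (hk ▸ Nat.lt_succ_self k) (Nat.succ_le_of_lt hkp)
  exact ⟨⟨k, hkp⟩, hP, not_le.1 hgt⟩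

lemma uniq_blk {n : ℕ} {α : Fin p → ℕ} {i : Fin n} {k l : Fin p}
    (hk : i ∈ blk n α k) (hl : i ∈ blk n α l) : k = l := by
  by_contra hne
  rcases lt_or_gt_of_ne hne with h | h
  · exact absurd ((beta_mono α (Nat.succ_le_of_lt h)).trans hl.1) (not_le.2 hk.2)
  · exact absurd ((beta_mono α (Nat.succ_le_of_lt h)).trans hk.1) (not_le.2 hl.2)

end MeshalkinAux

section Frames

open MeshalkinAux

variable {p : ℕ} {F V : Type*} [Field F] [AddCommGroup V] [Module F V]

/-- dimension vector -/
noncomputable def rvec (a : Fin p → Submodule F V) : Fin p → ℕ := fun k => Module.finrank F (a k)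

/-- `v` is an (ordered) frame adapted to the Meshalkin sequence `a`. -/
def IsFrame (n : ℕ) (a : Fin p → Submodule F V) (v : Fin n → V) : Prop :=
  LinearIndependent F v ∧
    ∀ k : Fin p, a k = Submodule.span F (v '' blk n (rvec a) k)

lemma frame_lt [FiniteDimensional F V] {n : ℕ} {a a' : Fin p → Submodule F V}
    {v : Fin n → V} (hv : LinearIndependent F v)
    (hfa : IsFrame n a v) (hfa' : IsFrame n a' v) {k : Fin p}
    (hb : beta (rvec a) k.1 = beta (rvec a') k.1)
    (hlt : beta (rvec a) (k.1 + 1) < beta (rvec a') (k.1 + 1)) :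
    a k < a' k := by
  have hαlt : rvec a k < rvec a' k := by
    have h1 := beta_succ' (rvec a) k
    have h2 := beta_succ' (rvec a') k
    omega
  have hle : a k ≤ a' k := by
    rw [hfa.2 k, hfa'.2 k]
    apply Submodule.span_mono
    apply Set.image_mono
    intro i hi
    exact ⟨hb ▸ hi.1, hi.2.trans_le hlt.le⟩
  refine lt_of_le_of_ne hle (fun he => ?_)
  have : rvec a k = rvec a' k := by rw [rvec, rvec, he]
  omega

lemma frame_unique [FiniteDimensional F V] {n : ℕ} {a a' : Fin p → Submodule F V}
    {v : Fin n → V}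
    (ha : ∑ i, Module.finrank F (a i) = n) (ha' : ∑ i, Module.finrank F (a' i) = n)
    (hfa : IsFrame n a v) (hfa' : IsFrame n a' v)
    (hcomp : ∀ k : Fin p, (k : ℕ) + 1 < p → ¬ (a k < a' k) ∧ ¬ (a' k < a k)) :
    a = a' := by
  have hbeq : ∀ m : ℕ, m ≤ p → beta (rvec a) m = beta (rvec a') m := by
    intro m
    induction m with
    | zero => intro _; rfl
    | succ m ih =>
      intro hm
      have hb := ih (Nat.le_of_succ_le hm)
      rcases lt_or_eq_of_le hm with hmp | hmp
      · set k : Fin p := ⟨m, Nat.lt_of_succ_lt hmp⟩ with hk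
        rcases lt_trichotomy (beta (rvec a) (m + 1)) (beta (rvec a') (m + 1)) with h | h | h
        · exact absurd (frame_lt hfa.1 hfa hfa' (k := k) hb h) (hcomp k hmp).1
        · exact h
        · exact absurd (frame_lt hfa.1 hfa' hfa (k := k) hb.symm h) (hcomp k hmp).2
      · have h1 : beta (rvec a) m.succ = n := by
          rw [show m.succ = p from hmp, beta_top]; exact ha
        have h2 : beta (rvec a') m.succ = n := by
          rw [show m.succ = p from hmp, beta_top]; exact ha'
        rw [h1, h2]
  funext k
  have hblk : blk n (rvec a) k = blk n (rvec a') k := by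
    unfold blk
    rw [hbeq k.1 k.isLt.le, hbeq (k.1 + 1) k.isLt]
  rw [hfa.2 k, hfa'.2 k, hblk]

end Frames

section Counting

open MeshalkinAux Finset

variable {p : ℕ} {F V : Type*} [Field F] [AddCommGroup V] [Module F V]
  [FiniteDimensional F V] {n : ℕ}

variable (a : Fin p → Submodule F V)

lemma emb_lt (hsum : ∑ i, Module.finrank F (a i) = n) (k : Fin p)
    (j : Fin (Module.finrank F (a k))) : beta (rvec a) k.1 + j.1 < n := by
  have h1 := beta_succ' (rvec a) k
  have h2 : beta (rvec a) (k.1 + 1) ≤ beta (rvec a) p := beta_mono _ k.isLt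
  have h3 : beta (rvec a) p = n := by rw [beta_top]; exact hsum
  have h4 : j.1 < rvec a k := j.isLt
  omega

/-- the index of the `j`-th element of the `k`-th block -/
noncomputable def emb (hsum : ∑ i, Module.finrank F (a i) = n) (k : Fin p)
    (j : Fin (Module.finrank F (a k))) : Fin n :=
  ⟨beta (rvec a) k.1 + j.1, emb_lt a hsum k j⟩

lemma emb_mem_blk (hsum : ∑ i, Module.finrank F (a i) = n) (k : Fin p)
    (j : Fin (Module.finrank F (a k))) : emb a hsum k j ∈ blk n (rvec a) k := by
  refine ⟨Nat.le_add_right _ _, ?_⟩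
  rw [beta_succ']
  have : j.1 < rvec a k := j.isLt
  simp only [emb]
  omega

lemma emb_inj (hsum : ∑ i, Module.finrank F (a i) = n) (k : Fin p) :
    Function.Injective (emb a hsum k) := by
  intro j j' h
  simp only [emb, Fin.mk.injEq, Fin.ext_iff] at h ⊢
  omega

lemma blk_off_lt {i : Fin n} {k : Fin p} (h : i ∈ blk n (rvec a) k) :
    i.1 - beta (rvec a) k.1 < Module.finrank F (a k) := by
  have h1 := beta_succ' (rvec a) k
  have h2 := h.1
  have h3 := h.2
  have : rvec a k = Module.finrank F (a k) := rfl
  omega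

open scoped Classical in
/-- assemble a family of block tuples into a single tuple -/
noncomputable def assemble (w : ∀ k : Fin p, Fin (Module.finrank F (a k)) → V) :
    Fin n → V := fun i =>
  ∑ k : Fin p, if h : i ∈ blk n (rvec a) k then
    w k ⟨i.1 - beta (rvec a) k.1, blk_off_lt a h⟩ else 0

lemma assemble_eval (w : ∀ k : Fin p, Fin (Module.finrank F (a k)) → V)
    {i : Fin n} {k : Fin p} (hik : i ∈ blk n (rvec a) k) :
    assemble a w i = w k ⟨i.1 - beta (rvec a) k.1, blk_off_lt a hik⟩ := by
  classical
  unfold assemble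
  rw [Finset.sum_eq_single k]
  · rw [dif_pos hik]
  · intro l _ hlk
    rw [dif_neg]
    exact fun h => hlk (uniq_blk h hik)
  · intro h; exact absurd (Finset.mem_univ k) h

lemma assemble_emb (hsum : ∑ i, Module.finrank F (a i) = n)
    (w : ∀ k : Fin p, Fin (Module.finrank F (a k)) → V) (k : Fin p)
    (j : Fin (Module.finrank F (a k))) :
    assemble a w (emb a hsum k j) = w k j := by
  rw [assemble_eval a w (emb_mem_blk a hsum k j)]
  congr 1
  ext
  simp [emb]

/-- Frames adapted to `a` are equivalent to families of bases of the blocks. -/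
noncomputable def frameEquiv (hn : Module.finrank F V = n) (hsup : (⨆ i, a i) = ⊤)
    (hsum : ∑ i, Module.finrank F (a i) = n) :
    {v : Fin n → V // IsFrame n a v} ≃
      ∀ k : Fin p, {w : Fin (Module.finrank F (a k)) → (a k) // LinearIndependent F w} where
  toFun v := fun k =>
    ⟨fun j => ⟨v.1 (emb a hsum k j), by
        rw [v.2.2 k]
        exact Submodule.subset_span ⟨emb a hsum k j, emb_mem_blk a hsum k j, rfl⟩⟩, by
      have h1 : LinearIndependent F (v.1 ∘ emb a hsum k) :=
        v.2.1.comp _ (emb_inj a hsum k)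
      exact LinearIndependent.of_comp ((a k).subtype) h1⟩
  invFun w := ⟨assemble a (fun k j => ((w k).1 j : V)), by
    have hspan : ∀ k, a k =
        Submodule.span F ((assemble a fun k j => ((w k).1 j : V)) '' blk n (rvec a) k) := by
      intro k
      have himg : (assemble a fun k j => ((w k).1 j : V)) '' blk n (rvec a) k =
          Subtype.val '' Set.range (w k).1 := by
        apply Set.Subset.antisymm
        · rintro x ⟨i, hi, rfl⟩
          rw [assemble_eval a _ hi]
          exact ⟨(w k).1 ⟨i.1 - beta (rvec a) k.1, blk_off_lt a hi⟩, Set.mem_range_self _, rfl⟩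
        · rintro x ⟨y, ⟨j, rfl⟩, rfl⟩
          exact ⟨emb a hsum k j, emb_mem_blk a hsum k j, by
            rw [assemble_emb a hsum (fun k j => ((w k).1 j : V)) k j]⟩
      rw [himg]
      rw [show (Subtype.val '' Set.range (w k).1 : Set V) =
        ⇑((a k).subtype) '' Set.range (w k).1 from rfl]
      rw [Submodule.span_image,
        (w k).2.span_eq_top_of_card_eq_finrank' (by simp), Submodule.map_subtype_top]
    refine ⟨?_, hspan⟩
    apply linearIndependent_of_top_le_span_of_card_eq_finrank
    · rw [← hsup]
      apply iSup_le
      intro k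
      rw [hspan k]
      exact Submodule.span_mono (Set.image_subset_range _ _)
    · simp [hn]⟩
  left_inv := by
    rintro ⟨v, hv⟩
    apply Subtype.ext
    funext i
    have hsbeta : beta (rvec a) p = n := by rw [beta_top]; exact hsum
    obtain ⟨k, hik⟩ := exists_blk hsbeta i
    simp only
    rw [assemble_eval a _ hik]
    congr 1
    ext
    simp only [emb]
    have := hik.1
    omega
  right_inv := by
    intro w
    funext k
    apply Subtype.ext
    funext j
    apply Subtype.ext
    exact assemble_emb a hsum (fun k j => ((w k).1 j : V)) k j

end Counting

section Numeric

open Finset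

lemma qFact_pos {q : ℕ} (hq : 2 ≤ q) (m : ℕ) : 0 < qFact q m := by
  apply Finset.prod_pos
  intro i _
  have h1 : q ^ 1 ≤ q ^ (i + 1) := Nat.pow_le_pow_right (by omega) (by omega)
  simp only [pow_one] at h1
  omega

lemma qprod_eq (q : ℕ) (hq : 2 ≤ q) (m : ℕ) :
    ∏ i ∈ range m, ((q : ℚ) ^ m - (q : ℚ) ^ i) =
      (q : ℚ) ^ (∑ i ∈ range m, i) * (qFact q m : ℚ) := by
  have h1 : ∀ i ∈ range m, (q : ℚ) ^ m - (q : ℚ) ^ i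
      = (q : ℚ) ^ i * ((q : ℚ) ^ (m - i) - 1) := by
    intro i hi
    rw [mul_sub, mul_one, ← pow_add, Nat.add_sub_cancel' (mem_range.1 hi).le]
  rw [Finset.prod_congr rfl h1, Finset.prod_mul_distrib, Finset.prod_pow_eq_pow_sum]
  congr 1
  have h2 : ∏ i ∈ range m, ((q : ℚ) ^ (m - i) - 1)
      = ∏ i ∈ range m, ((q : ℚ) ^ (i + 1) - 1) := by
    rw [← Finset.prod_range_reflect (fun i => ((q : ℚ) ^ (i + 1) - 1)) m]
    refine Finset.prod_congr rfl fun i hi => ?_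
    have := mem_range.1 hi
    congr 2
    omega
  rw [h2, qFact, Nat.cast_prod]
  refine Finset.prod_congr rfl fun i _ => ?_
  have hpow : 1 ≤ q ^ (i + 1) := Nat.one_le_pow _ _ (by omega)
  rw [Nat.cast_sub hpow, Nat.cast_pow, Nat.cast_one]

lemma s2_add {p : ℕ} (α : Fin p → ℕ) :
    2 * s2 α + ∑ k, α k * α k = (∑ k, α k) * (∑ k, α k) := by
  classical
  have h1 : (∑ k, α k) * (∑ k, α k) = ∑ x : Fin p × Fin p, α x.1 * α x.2 := by
    rw [Finset.sum_mul_sum, ← Fintype.sum_prod_type']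
  have h3 : (∑ x : Fin p × Fin p, if x.1 < x.2 then α x.1 * α x.2 else 0) = s2 α := by
    rw [Fintype.sum_prod_type, s2]
    exact Finset.sum_congr rfl fun i _ => (Finset.sum_filter _ _).symm
  have h4 : (∑ x : Fin p × Fin p, if x.2 < x.1 then α x.1 * α x.2 else 0) = s2 α := by
    rw [← h3]
    apply Fintype.sum_equiv (Equiv.prodComm (Fin p) (Fin p))
    intro x
    simp only [Equiv.prodComm_apply, Prod.fst_swap, Prod.snd_swap]
    by_cases h : x.2 < x.1 <;> simp [h, mul_comm]
  have h5 : (∑ x : Fin p × Fin p, if x.1 = x.2 then α x.1 * α x.2 else 0)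
      = ∑ k, α k * α k := by
    rw [Fintype.sum_prod_type]
    refine Finset.sum_congr rfl fun i _ => ?_
    simp
  have h2 : ∑ x : Fin p × Fin p, α x.1 * α x.2 =
      (∑ x : Fin p × Fin p, if x.1 < x.2 then α x.1 * α x.2 else 0) +
      ((∑ x : Fin p × Fin p, if x.2 < x.1 then α x.1 * α x.2 else 0) +
       (∑ x : Fin p × Fin p, if x.1 = x.2 then α x.1 * α x.2 else 0)) := by
    rw [← Finset.sum_add_distrib, ← Finset.sum_add_distrib]
    refine Finset.sum_congr rfl fun x _ => ?_
    rcases lt_trichotomy x.1 x.2 with h | h | h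
    · simp [h, asymm h, ne_of_lt h]
    · simp [h]
    · simp [h, asymm h, ne_of_gt h]
  rw [h1, h2, h3, h4, h5]
  ring

lemma exp_identity {p : ℕ} (α : Fin p → ℕ) {n : ℕ} (hsum : ∑ k, α k = n) :
    s2 α + ∑ k, (∑ i ∈ range (α k), i) = ∑ i ∈ range n, i := by
  have key := s2_add α
  rw [hsum] at key
  have hterm : ∀ k : Fin p, α k * α k = α k * (α k - 1) + α k := by
    intro k
    cases h : α k with
    | zero => rfl
    | succ s => rw [Nat.succ_sub_one]; ring
  have hsum2 : ∑ k, α k * α k = (∑ k, α k * (α k - 1)) + n := by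
    rw [← hsum, ← Finset.sum_add_distrib]
    exact Finset.sum_congr rfl fun k _ => hterm k
  have e2 : ∀ m : ℕ, 2 * ∑ i ∈ range m, i = m * (m - 1) := fun m => by
    rw [mul_comm]; exact Finset.sum_range_id_mul_two m
  have e3 : 2 * ∑ k, (∑ i ∈ range (α k), i) = ∑ k, α k * (α k - 1) := by
    rw [Finset.mul_sum]
    exact Finset.sum_congr rfl fun k _ => e2 (α k)
  have e1 := e2 n
  have e4 : n * (n - 1) + n = n * n := by
    cases n with
    | zero => rfl
    | succ s => rw [Nat.succ_sub_one]; ring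
  generalize hG : n * (n - 1) = G at e1 e4
  generalize hH : n * n = H at key e4
  omega

lemma key_frac {p : ℕ} (q n : ℕ) (hq : 2 ≤ q) (α : Fin p → ℕ) (hsum : ∑ k, α k = n) :
    1 / (gaussMultinomial q n α * (q : ℚ) ^ (s2 α)) =
      (∏ k, ∏ i ∈ range (α k), ((q : ℚ) ^ (α k) - (q : ℚ) ^ i)) /
        (∏ i ∈ range n, ((q : ℚ) ^ n - (q : ℚ) ^ i)) := by
  have hq0 : (q : ℚ) ≠ 0 := by
    simp only [ne_eq, Nat.cast_eq_zero]; omega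
  have hA : (qFact q n : ℚ) ≠ 0 := by
    simp only [ne_eq, Nat.cast_eq_zero]
    exact (qFact_pos hq n).ne'
  have hB : (∏ k, (qFact q (α k) : ℚ)) ≠ 0 :=
    Finset.prod_ne_zero_iff.2 fun k _ => by
      simp only [ne_eq, Nat.cast_eq_zero]
      exact (qFact_pos hq (α k)).ne'
  have hk : (∏ k, ∏ i ∈ range (α k), ((q : ℚ) ^ (α k) - (q : ℚ) ^ i)) =
      (q : ℚ) ^ (∑ k, ∑ i ∈ range (α k), i) * ∏ k, (qFact q (α k) : ℚ) := by
    rw [Finset.prod_congr rfl (fun k _ => qprod_eq q hq (α k)),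
      Finset.prod_mul_distrib, Finset.prod_pow_eq_pow_sum]
  rw [gaussMultinomial, qprod_eq q hq n, hk, ← exp_identity α hsum, pow_add]
  field_simp

end Numeric

section Main

open MeshalkinAux Finset

lemma card_frame {p : ℕ} {F V : Type*} [Field F] [Fintype F] [AddCommGroup V] [Module F V]
    [FiniteDimensional F V] [Finite V] {n : ℕ} (a : Fin p → Submodule F V)
    (hn : Module.finrank F V = n) (hsup : (⨆ i, a i) = ⊤)
    (hsum : ∑ i, Module.finrank F (a i) = n) :
    Nat.card {v : Fin n → V // IsFrame n a v} =
      ∏ k : Fin p, ∏ i ∈ Finset.range (Module.finrank F (a k)),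
        (Fintype.card F ^ Module.finrank F (a k) - Fintype.card F ^ i) := by
  rw [Nat.card_congr (frameEquiv a hn hsup hsum), Nat.card_pi]
  refine Finset.prod_congr rfl fun k _ => ?_
  have h := card_linearIndependent (K := F) (V := a k)
    (k := Module.finrank F (a k)) le_rfl
  rw [h]
  exact Fin.prod_univ_eq_prod_range
    (fun i => Fintype.card F ^ Module.finrank F (a k) - Fintype.card F ^ i)
    (Module.finrank F (a k))

lemma cast_qprod (q m : ℕ) (hq : 2 ≤ q) :
    ((∏ i ∈ range m, (q ^ m - q ^ i) : ℕ) : ℚ) =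
      ∏ i ∈ range m, ((q : ℚ) ^ m - (q : ℚ) ^ i) := by
  rw [Nat.cast_prod]
  refine Finset.prod_congr rfl fun i hi => ?_
  rw [Nat.cast_sub (Nat.pow_le_pow_right (by omega) (mem_range.1 hi).le),
    Nat.cast_pow, Nat.cast_pow]

/-- Antichain case of the projective Meshalkin LYM inequality: for a family `M` of
Meshalkin sequences of length `p ≥ 2` in `PG(n-1,q)` with each `M_k` for `k < p` an
antichain, `∑_{a ∈ M} 1/([n; r(a)]_q · q^(s_2(r(a)))) ≤ 1`. -/
theorem meshalkin_projective_antichain_lym (q n p : ℕ) (hp : 2 ≤ p)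
    (F : Type*) [Field F] [Fintype F] (hq : Fintype.card F = q)
    (V : Type*) [AddCommGroup V] [Module F V] [FiniteDimensional F V]
    (hn : Module.finrank F V = n)
    (M : Finset (Fin p → Submodule F V))
    (hmesh : ∀ a ∈ M, (⨆ i, a i) = ⊤ ∧ ∑ i, Module.finrank F (a i) = n)
    (hanti : ∀ k : Fin p, (k : ℕ) + 1 < p →
      IsAntichain (· ≤ ·) {b : Submodule F V | ∃ a ∈ M, a k = b}) :
    ∑ a ∈ M, 1 / (gaussMultinomial q n (fun i => Module.finrank F (a i)) *
        (q : ℚ) ^ (s2 (fun i => Module.finrank F (a i)))) ≤ 1 := by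
  classical
  have hq2 : 2 ≤ q := by rw [← hq]; exact Fintype.one_lt_card
  have hFinV : Finite V := Finite.of_equiv _ (Module.finBasis F V).equivFun.toEquiv.symm
  letI : Fintype V := Fintype.ofFinite V
  set T : (Fin p → Submodule F V) → Finset (Fin n → V) :=
    fun a => Finset.univ.filter (fun v => IsFrame n a v) with hT
  have hTcard : ∀ a ∈ M, (T a).card =
      ∏ k : Fin p, ∏ i ∈ Finset.range (Module.finrank F (a k)),
        (q ^ Module.finrank F (a k) - q ^ i) := by
    intro a ha
    have h := card_frame a hn (hmesh a ha).1 (hmesh a ha).2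
    rw [hq] at h
    rw [← h, Nat.card_eq_fintype_card, Fintype.card_subtype]
  have hdisj : ∀ a ∈ M, ∀ a' ∈ M, a ≠ a' → Disjoint (T a) (T a') := by
    intro a ha a' ha' hne
    rw [Finset.disjoint_left]
    intro v hv hv'
    simp only [hT, Finset.mem_filter] at hv hv'
    apply hne
    refine frame_unique (hmesh a ha).2 (hmesh a' ha').2 hv.2 hv'.2 ?_
    intro k hk
    have hAnti := hanti k hk
    constructor
    · intro hlt
      exact hAnti ⟨a, ha, rfl⟩ ⟨a', ha', rfl⟩ hlt.ne hlt.le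
    · intro hlt
      exact hAnti ⟨a', ha', rfl⟩ ⟨a, ha, rfl⟩ hlt.ne hlt.le
  have hsub : M.biUnion T ⊆
      Finset.univ.filter (fun v : Fin n → V => LinearIndependent F v) := by
    intro v hv
    rw [Finset.mem_biUnion] at hv
    obtain ⟨a, ha, hv⟩ := hv
    simp only [hT, Finset.mem_filter] at hv
    exact Finset.mem_filter.2 ⟨Finset.mem_univ v, hv.2.1⟩
  have hcount : ∑ a ∈ M, (T a).card ≤
      (Finset.univ.filter (fun v : Fin n → V => LinearIndependent F v)).card := by
    rw [← Finset.card_biUnion hdisj]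
    exact Finset.card_le_card hsub
  have htot : (Finset.univ.filter (fun v : Fin n → V => LinearIndependent F v)).card =
      ∏ i ∈ Finset.range n, (q ^ n - q ^ i) := by
    have h := card_linearIndependent (K := F) (V := V) (k := n) hn.ge
    rw [hq, hn] at h
    rw [← Fin.prod_univ_eq_prod_range (fun i => q ^ n - q ^ i) n, ← h,
      Nat.card_eq_fintype_card, Fintype.card_subtype]
  have hDpos : (0 : ℚ) < ∏ i ∈ Finset.range n, ((q : ℚ) ^ n - (q : ℚ) ^ i) := by
    apply Finset.prod_pos
    intro i hi
    have h1 : (q : ℚ) ^ i < (q : ℚ) ^ n := by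
      apply pow_lt_pow_right₀ _ (mem_range.1 hi)
      have : (2 : ℚ) ≤ (q : ℚ) := by exact_mod_cast hq2
      linarith
    linarith
  have hstep : ∑ a ∈ M, 1 / (gaussMultinomial q n (fun i => Module.finrank F (a i)) *
        (q : ℚ) ^ (s2 (fun i => Module.finrank F (a i)))) =
      (∑ a ∈ M, ((T a).card : ℚ)) / (∏ i ∈ range n, ((q : ℚ) ^ n - (q : ℚ) ^ i)) := by
    rw [Finset.sum_div]
    refine Finset.sum_congr rfl fun a ha => ?_
    rw [key_frac q n hq2 _ (hmesh a ha).2, hTcard a ha]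
    congr 1
    rw [Nat.cast_prod]
    refine Finset.prod_congr rfl fun k _ => (cast_qprod q _ hq2).symm
  rw [hstep, div_le_one hDpos]
  calc ∑ a ∈ M, ((T a).card : ℚ)
      = ((∑ a ∈ M, (T a).card : ℕ) : ℚ) := by rw [Nat.cast_sum]
    _ ≤ ((∏ i ∈ range n, (q ^ n - q ^ i) : ℕ) : ℚ) := by
        exact_mod_cast htot ▸ hcount
    _ = ∏ i ∈ range n, ((q : ℚ) ^ n - (q : ℚ) ^ i) := cast_qprod q n hq2

end Main
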